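/- Let 1/2 < α < 1 be fixed. Let M ≥ 1 and let B = {b_1, …, b_N}, N = 2^M, be the set of squarefree positive integers whose prime factors are among the first M primes. Set R = ⌊M^(1−α) / (e·(log M + log log M)^α)⌋. Then for all sufficiently large M, for every index k ∈ {1, …, N}, the sum over all ℓ with δ(b_k, b_ℓ) = R of (gcd(b_k, b_ℓ))^(2α)/(b_k·b_ℓ)^α is at least exp(M^(1−α)/(2.72·(log M)^α)). -/

import Mathlib

open scoped symmDiff

/-- The set of squarefree positive integers whose prime factors are among the
first `M` primes (one element for each subset of `{p_1, …, p_M}`). -/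
noncomputable def primeProdSet (M : ℕ) : Finset ℕ :=
  (Finset.range M).powerset.image (fun s => ∏ r ∈ s, Nat.nth Nat.Prime r)

/-- `R = ⌊M^(1−α) / (e·(log M + log log M)^α)⌋`. -/
noncomputable def Rval (M : ℕ) (α : ℝ) : ℕ :=
  ⌊(M : ℝ) ^ (1 - α) / (Real.exp 1 * (Real.log M + Real.log (Real.log M)) ^ α)⌋₊

namespace Stmt6Aux

open Finset Filter Real

noncomputable def pp (r : ℕ) : ℕ := Nat.nth Nat.Prime r

lemma pp_prime (r : ℕ) : (pp r).Prime := Nat.prime_nth_prime r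
lemma pp_pos (r : ℕ) : 0 < pp r := (pp_prime r).pos
lemma pp_inj : Function.Injective pp := Nat.nth_injective Nat.infinite_setOf_prime
lemma prod_pp_pos (s : Finset ℕ) : 0 < ∏ r ∈ s, pp r :=
  Finset.prod_pos fun r _ => pp_pos r

lemma centralBinom_le_pow (n : ℕ) (hn : 1 ≤ n) :
    Nat.centralBinom n ≤ (2*n) ^ (Nat.count Nat.Prime (2*n+1)) := by
  classical
  have hc0 : Nat.centralBinom n ≠ 0 := (Nat.centralBinom_pos n).ne'
  have hfac := Nat.factorization_prod_pow_eq_self hc0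
  rw [Finsupp.prod] at hfac
  rw [Nat.support_factorization] at hfac
  have hsub : (Nat.centralBinom n).primeFactors
      ⊆ (Finset.range (2*n+1)).filter Nat.Prime := by
    intro p hp
    have hprime := Nat.prime_of_mem_primeFactors hp
    have hν : 0 < (Nat.centralBinom n).factorization p := by
      rw [← Nat.support_factorization, Finsupp.mem_support_iff] at hp
      omega
    have hple : p ^ (Nat.centralBinom n).factorization p ≤ 2*n :=
      Nat.pow_factorization_choose_le (by omega)
    have : p ≤ 2*n := le_trans (le_trans (Nat.le_self_pow hν.ne' p)
      (le_refl _)) hple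
    rw [Finset.mem_filter, Finset.mem_range]
    exact ⟨by omega, hprime⟩
  calc Nat.centralBinom n
      = ∏ p ∈ (Nat.centralBinom n).primeFactors,
          p ^ (Nat.centralBinom n).factorization p := hfac.symm
    _ ≤ (2*n) ^ (Nat.centralBinom n).primeFactors.card := by
        apply Finset.prod_le_pow_card
        intro p hp
        exact Nat.pow_factorization_choose_le (by omega)
    _ ≤ (2*n) ^ (Nat.count Nat.Prime (2*n+1)) := by
        apply Nat.pow_le_pow_right (by omega)
        rw [Nat.count_eq_card_filter_range]
        exact Finset.card_le_card hsub

lemma cheb_log (n : ℕ) (hn : 4 ≤ n) :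
    (n:ℝ) * Real.log 4 ≤ (Nat.count Nat.Prime (2*n+1) + 1) * Real.log (2*n) := by
  have h1 : (4:ℕ)^n ≤ (2*n)^(Nat.count Nat.Prime (2*n+1) + 1) := by
    calc (4:ℕ)^n ≤ n * Nat.centralBinom n :=
          (Nat.four_pow_lt_mul_centralBinom n hn).le
      _ ≤ (2*n) * (2*n) ^ (Nat.count Nat.Prime (2*n+1)) := by
          apply Nat.mul_le_mul (by omega) (centralBinom_le_pow n (by omega))
      _ = (2*n) ^ (Nat.count Nat.Prime (2*n+1) + 1) := by
          rw [pow_succ]; ring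
  have h2 : ((4:ℝ))^n ≤ ((2*n:ℕ):ℝ)^(Nat.count Nat.Prime (2*n+1) + 1) := by
    exact_mod_cast h1
  have h3 := Real.log_le_log (by positivity) h2
  rw [Real.log_pow, Real.log_pow] at h3
  push_cast at h3 ⊢
  convert h3 using 2

lemma nth_prime_le : ∀ᶠ r : ℕ in atTop, (pp r : ℝ) ≤ 2 * r * Real.log r := by
  have hlogtend : Tendsto (fun r : ℕ => Real.log r) atTop atTop :=
    Real.tendsto_log_atTop.comp tendsto_natCast_atTop_atTop
  have hev1 : ∀ᶠ r : ℕ in atTop, 20 ≤ r := eventually_ge_atTop 20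
  have hev2 : ∀ᶠ r : ℕ in atTop, (7:ℝ) ≤ Real.log r := hlogtend.eventually_ge_atTop 7
  have hev3 : ∀ᶠ r : ℕ in atTop, ‖Real.log (Real.log r)‖ ≤ 0.1 * ‖Real.log r‖ :=
    hlogtend.eventually (Real.isLittleO_log_id_atTop.def (by norm_num))
  filter_upwards [hev1, hev2, hev3] with r hr20 hA7 hll
  set A := Real.log r with hAdef
  have hr20R : (20:ℝ) ≤ (r:ℝ) := by exact_mod_cast hr20
  have hA0 : 0 < A := by linarith
  have hllA : Real.log A ≤ 0.1 * A := by
    rw [Real.norm_eq_abs, Real.norm_eq_abs, abs_of_pos hA0] at hll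
    exact le_trans (le_abs_self _) hll
  set xR : ℝ := 2 * r * A with hxRdef
  have hxR280 : 280 ≤ xR := by nlinarith
  set x : ℕ := ⌊xR⌋₊ with hxdef
  have hx_le : (x:ℝ) ≤ xR := Nat.floor_le (by positivity)
  have hx_gt : xR - 1 < (x:ℝ) := Nat.sub_one_lt_floor xR
  have hx279 : 279 ≤ x := Nat.le_floor (by push_cast; linarith)
  set n : ℕ := (x-1)/2 with hndef
  have hn4 : 4 ≤ n := by omega
  have h2n1 : 2*n+1 ≤ x := by omega
  have h2n_ge : x - 2 ≤ 2*n := by omega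
  have h2nR : (x:ℝ) - 2 ≤ 2*(n:ℝ) := by
    have : ((x-2:ℕ):ℝ) ≤ ((2*n:ℕ):ℝ) := by exact_mod_cast h2n_ge
    push_cast [Nat.cast_sub (by omega : 2 ≤ x)] at this
    linarith
  have h2nle : 2*(n:ℝ) ≤ xR := by
    have : ((2*n:ℕ):ℝ) ≤ (x:ℝ) := by exact_mod_cast (by omega : 2*n ≤ x)
    push_cast at this
    linarith
  -- suffices r < count Prime (x+1)
  have hcount : r < Nat.count Nat.Prime (x+1) := by
    by_contra hcon
    push_neg at hcon
    have hπ2 : Nat.count Nat.Prime (2*n+1) ≤ r :=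
      le_trans (Nat.count_monotone _ (by omega)) hcon
    have hkey := cheb_log n hn4
    have hlog2n_nonneg : 0 ≤ Real.log (2*(n:ℝ)) := by
      apply Real.log_nonneg; push_cast; nlinarith
    have hc1 : (n:ℝ) * Real.log 4 ≤ ((r:ℝ)+1) * Real.log (2*(n:ℝ)) := by
      calc (n:ℝ) * Real.log 4
          ≤ ((Nat.count Nat.Prime (2*n+1):ℝ) + 1) * Real.log (2*(n:ℝ)) := by
            convert hkey using 3 <;> push_cast <;> ring
        _ ≤ ((r:ℝ)+1) * Real.log (2*(n:ℝ)) := by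
            apply mul_le_mul_of_nonneg_right _ hlog2n_nonneg
            have : (Nat.count Nat.Prime (2*n+1):ℝ) ≤ (r:ℝ) := by exact_mod_cast hπ2
            linarith
    have hlogxR : Real.log xR = Real.log 2 + A + Real.log A := by
      rw [hxRdef, Real.log_mul (by positivity) hA0.ne', Real.log_mul (by norm_num)
        (by positivity : (r:ℝ) ≠ 0)]
    have hlog2n_le : Real.log (2*(n:ℝ)) ≤ 1.2 * A := by
      have h1 : Real.log (2*(n:ℝ)) ≤ Real.log xR := by
        apply Real.log_le_log (by positivity) h2nle
      rw [hlogxR] at h1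
      have hlog2 : Real.log 2 ≤ 0.7 := by linarith [Real.log_two_lt_d9]
      linarith
    have hlog4 : (1.386:ℝ) ≤ Real.log 4 := by
      have : (4:ℝ) = 2^2 := by norm_num
      rw [this, Real.log_pow]
      push_cast
      linarith [Real.log_two_gt_d9]
    have hnR : (r:ℝ) * A - 1.5 ≤ (n:ℝ) := by
      have : xR - 3 ≤ 2*(n:ℝ) := by linarith
      rw [hxRdef] at this
      linarith
    have hn0 : (0:ℝ) ≤ (n:ℝ) := by positivity
    have hfin1 : ((r:ℝ)*A - 1.5) * 1.386 ≤ (n:ℝ) * Real.log 4 := by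
      apply mul_le_mul hnR hlog4 (by norm_num) hn0
    have hfin2 : ((r:ℝ)+1) * Real.log (2*(n:ℝ)) ≤ ((r:ℝ)+1) * (1.2*A) := by
      apply mul_le_mul_of_nonneg_left hlog2n_le (by linarith)
    nlinarith [mul_nonneg (by linarith : (0:ℝ) ≤ A - 7) (by linarith : (0:ℝ) ≤ (r:ℝ) - 20)]
  have hnth : Nat.nth Nat.Prime r < x + 1 :=
    (Nat.lt_nth_iff_count_lt Nat.infinite_setOf_prime).mp hcount
  have : (pp r : ℝ) ≤ (x:ℝ) := by
    have : pp r ≤ x := by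
      unfold pp; omega
    exact_mod_cast this
  linarith

lemma pow_div_le_choose (R M : ℕ) (hR : 1 ≤ R) (hRM : R ≤ M) :
    ((M : ℝ) / R) ^ R ≤ (M.choose R : ℝ) := by
  clear hR
  induction R generalizing M with
  | zero => simp
  | succ R ih =>
    rcases Nat.eq_zero_or_pos R with rfl | hRpos
    · simp [Nat.choose_one_right]
    · have hM1 : 1 ≤ M := by omega
      have hRM' : R ≤ M - 1 := by omega
      have hMR : (0:ℝ) < (M:ℝ) := by exact_mod_cast lt_of_lt_of_le (by omega) hRM
      have hR1 : (0:ℝ) < (R:ℝ) := by exact_mod_cast hRpos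
      have hRS : (0:ℝ) < ((R:ℝ)+1) := by positivity
      have hcast : ((M-1 : ℕ) : ℝ) = (M:ℝ) - 1 := by
        push_cast [Nat.cast_sub hM1]; ring
      have hid : (M:ℝ) * ((M-1).choose R : ℝ) = (M.choose (R+1) : ℝ) * ((R:ℝ)+1) := by
        have := Nat.add_one_mul_choose_eq (M-1) R
        rw [(by omega : M-1+1 = M)] at this
        exact_mod_cast this
      have hih := ih (M-1) hRM'
      rw [hcast] at hih
      have hmono : ((M:ℝ) / ((R:ℝ)+1)) ^ R ≤ (((M:ℝ)-1) / (R:ℝ)) ^ R := by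
        apply pow_le_pow_left₀ (by positivity)
        rw [div_le_div_iff₀ hRS hR1]
        have : (R:ℝ) + 1 ≤ (M:ℝ) := by exact_mod_cast hRM
        nlinarith
      have hgoal : ((M:ℝ) / ((R+1:ℕ):ℝ)) ^ (R+1) = ((M:ℝ) / ((R:ℝ)+1)) ^ (R+1) := by
        push_cast; ring
      rw [hgoal]
      calc ((M:ℝ) / ((R:ℝ)+1)) ^ (R+1)
          = ((M:ℝ) / ((R:ℝ)+1)) * ((M:ℝ) / ((R:ℝ)+1)) ^ R := by ring
        _ ≤ ((M:ℝ) / ((R:ℝ)+1)) * ((((M:ℝ)-1) / (R:ℝ)) ^ R) := by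
            apply mul_le_mul_of_nonneg_left hmono (by positivity)
        _ ≤ ((M:ℝ) / ((R:ℝ)+1)) * ((M-1).choose R : ℝ) := by
            apply mul_le_mul_of_nonneg_left hih (by positivity)
        _ = (M.choose (R+1) : ℝ) := by
            rw [div_mul_eq_mul_div, hid]
            field_simp

lemma sum_log_le (M : ℕ) (hM : 1 ≤ M) :
    ∑ r ∈ Finset.range M, Real.log r ≤ M * Real.log M - M + 1 := by
  induction M with
  | zero => omega
  | succ M ih =>
    rcases Nat.eq_zero_or_pos M with rfl | hMpos
    · simp
    · have hM : (0:ℝ) < (M:ℝ) := by exact_mod_cast hMpos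
      have hlog : Real.log ((M:ℝ) / ((M:ℝ)+1)) ≤ (M:ℝ)/((M:ℝ)+1) - 1 :=
        Real.log_le_sub_one_of_pos (by positivity)
      rw [Real.log_div hM.ne' (by positivity)] at hlog
      have hstep : 1 ≤ ((M:ℝ)+1) * (Real.log ((M:ℝ)+1) - Real.log M) := by
        have h1 : (M:ℝ)/((M:ℝ)+1) - 1 = -(1/((M:ℝ)+1)) := by field_simp; ring
        rw [h1] at hlog
        have h2 : 1/((M:ℝ)+1) ≤ Real.log ((M:ℝ)+1) - Real.log M := by linarith
        calc (1:ℝ) = ((M:ℝ)+1) * (1/((M:ℝ)+1)) := by field_simp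
          _ ≤ ((M:ℝ)+1) * (Real.log ((M:ℝ)+1) - Real.log M) := by
              apply mul_le_mul_of_nonneg_left h2 (by positivity)
      rw [Finset.sum_range_succ]
      have := ih hMpos
      push_cast
      nlinarith [this]

lemma log_nat_nonneg (r : ℕ) : 0 ≤ Real.log r := by
  rcases Nat.eq_zero_or_pos r with rfl | hr
  · simp
  · exact Real.log_nonneg (by exact_mod_cast hr)

lemma theta_bound : ∀ᶠ M : ℕ in atTop,
    ∑ r ∈ Finset.range M, Real.log (pp r)
      ≤ M * (Real.log M + Real.log (Real.log M) - 1/4) := by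
  obtain ⟨r₂, hr₂⟩ := eventually_atTop.mp nth_prime_le
  set r₃ := max r₂ 3 with hr₃def
  set C := ∑ r ∈ Finset.range r₃, Real.log (pp r) with hCdef
  have hev1 : ∀ᶠ M : ℕ in atTop, r₃ ≤ M := eventually_ge_atTop r₃
  have hev2 : ∀ᶠ M : ℕ in atTop, C + 1 ≤ 0.05 * (M:ℝ) := by
    have ht : Tendsto (fun M : ℕ => 0.05 * (M:ℝ)) atTop atTop :=
      (tendsto_natCast_atTop_atTop).const_mul_atTop (by norm_num)
    exact ht.eventually_ge_atTop (C+1)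
  have hev3 : ∀ᶠ M : ℕ in atTop, (1:ℝ) ≤ Real.log M :=
    (Real.tendsto_log_atTop.comp tendsto_natCast_atTop_atTop).eventually_ge_atTop 1
  filter_upwards [hev1, hev2, hev3] with M h1 h2 h3
  have hM1 : 1 ≤ M := le_trans (by omega) h1
  have hM0 : (0:ℝ) ≤ (M:ℝ) := by positivity
  have hll0 : 0 ≤ Real.log (Real.log M) := Real.log_nonneg h3
  have hsplit : ∑ r ∈ Finset.range M, Real.log (pp r)
      = C + ∑ r ∈ Finset.Ico r₃ M, Real.log (pp r) := by
    rw [hCdef, Finset.range_eq_Ico]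
    rw [Finset.range_eq_Ico]
    exact (Finset.sum_Ico_consecutive (f := fun r => Real.log (pp r)) (Nat.zero_le r₃) h1).symm
  have hterm : ∀ r ∈ Finset.Ico r₃ M, Real.log (pp r)
      ≤ (Real.log 2 + Real.log (Real.log M)) + Real.log r := by
    intro r hr
    rw [Finset.mem_Ico] at hr
    have hr3 : 3 ≤ r := le_trans (le_max_right _ _) hr.1
    have hrM : (r:ℝ) ≤ (M:ℝ) := by exact_mod_cast hr.2.le
    have hr0 : (0:ℝ) < (r:ℝ) := by exact_mod_cast (by omega : 0 < r)
    have hlogr1 : (1:ℝ) ≤ Real.log r := by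
      have h3r : (3:ℝ) ≤ (r:ℝ) := by exact_mod_cast hr3
      have : Real.exp 1 ≤ (r:ℝ) := by linarith [Real.exp_one_lt_d9]
      calc (1:ℝ) = Real.log (Real.exp 1) := (Real.log_exp 1).symm
        _ ≤ Real.log r := Real.log_le_log (Real.exp_pos 1) this
    have hp := hr₂ r (le_trans (le_max_left _ _) hr.1)
    have hppos : (0:ℝ) < (pp r : ℝ) := by exact_mod_cast pp_pos r
    have hlog1 : Real.log (pp r) ≤ Real.log (2 * r * Real.log r) :=
      Real.log_le_log hppos hp
    have hlog2 : Real.log (2 * (r:ℝ) * Real.log r)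
        = Real.log 2 + Real.log r + Real.log (Real.log r) := by
      rw [Real.log_mul (by positivity) (by linarith), Real.log_mul (by norm_num) hr0.ne']
    have hlog3 : Real.log (Real.log r) ≤ Real.log (Real.log M) := by
      apply Real.log_le_log (by linarith)
      exact Real.log_le_log hr0 hrM
    linarith
  have hsum2 : ∑ r ∈ Finset.Ico r₃ M, Real.log (pp r)
      ≤ (M - r₃ : ℕ) * (Real.log 2 + Real.log (Real.log M))
        + ∑ r ∈ Finset.Ico r₃ M, Real.log r := by
    calc ∑ r ∈ Finset.Ico r₃ M, Real.log (pp r)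
        ≤ ∑ r ∈ Finset.Ico r₃ M, ((Real.log 2 + Real.log (Real.log M)) + Real.log r) :=
          Finset.sum_le_sum hterm
      _ = (M - r₃ : ℕ) * (Real.log 2 + Real.log (Real.log M))
          + ∑ r ∈ Finset.Ico r₃ M, Real.log r := by
          rw [Finset.sum_add_distrib, Finset.sum_const, Nat.card_Ico, nsmul_eq_mul]
  have hsum3 : ∑ r ∈ Finset.Ico r₃ M, Real.log r ≤ M * Real.log M - M + 1 := by
    calc ∑ r ∈ Finset.Ico r₃ M, Real.log r
        ≤ ∑ r ∈ Finset.range M, Real.log r := by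
          apply Finset.sum_le_sum_of_subset_of_nonneg
          · rw [Finset.range_eq_Ico]
            exact Finset.Ico_subset_Ico (Nat.zero_le _) le_rfl
          · intro i _ _; exact log_nat_nonneg i
      _ ≤ M * Real.log M - M + 1 := sum_log_le M hM1
  have hconst : ((M - r₃ : ℕ):ℝ) * (Real.log 2 + Real.log (Real.log M))
      ≤ (M:ℝ) * (Real.log 2 + Real.log (Real.log M)) := by
    apply mul_le_mul_of_nonneg_right _ (by linarith [Real.log_nonneg (by norm_num : (1:ℝ) ≤ 2)])
    exact_mod_cast Nat.sub_le M r₃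
  have hlog2' : Real.log 2 ≤ 0.7 := by linarith [Real.log_two_lt_d9]
  have hfinal : 0.05 * (M:ℝ) ≤ (M:ℝ) * (3/4 - Real.log 2) := by
    rw [mul_comm]
    apply mul_le_mul_of_nonneg_left _ hM0
    linarith
  rw [hsplit]
  nlinarith [hsum2, hsum3, hconst]

lemma primeFactors_prod_pp (s : Finset ℕ) :
    (∏ r ∈ s, pp r).primeFactors = s.image pp := by
  have h : ∏ r ∈ s, pp r = ∏ q ∈ s.image pp, q := by
    rw [Finset.prod_image (fun a _ b _ h => pp_inj h)]
  rw [h, Nat.primeFactors_prod]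
  intro q hq
  obtain ⟨r, -, rfl⟩ := Finset.mem_image.mp hq
  exact pp_prime r

lemma prod_pp_inj : Function.Injective (fun s : Finset ℕ => ∏ r ∈ s, pp r) := by
  intro s t h
  have := congrArg Nat.primeFactors h
  rw [primeFactors_prod_pp, primeFactors_prod_pp] at this
  exact Finset.image_injective pp_inj this

lemma coprime_prod_pp {u v : Finset ℕ} (h : Disjoint u v) :
    Nat.Coprime (∏ r ∈ u, pp r) (∏ r ∈ v, pp r) := by
  apply Nat.Coprime.prod_left
  intro i hi
  apply Nat.Coprime.prod_right
  intro j hj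
  rw [Nat.coprime_primes (pp_prime i) (pp_prime j)]
  intro hEq
  exact (Finset.disjoint_left.mp h hi) (pp_inj hEq ▸ hj)

lemma prod_split (s t : Finset ℕ) :
    ∏ r ∈ s, pp r = (∏ r ∈ s ∩ t, pp r) * ∏ r ∈ s \ t, pp r := by
  rw [← Finset.prod_union (disjoint_sdiff.mono_left Finset.inter_subset_right)]
  congr 1
  rw [Finset.union_comm]
  exact (Finset.sdiff_union_inter s t).symm

lemma gcd_prod_pp (s t : Finset ℕ) :
    Nat.gcd (∏ r ∈ s, pp r) (∏ r ∈ t, pp r) = ∏ r ∈ s ∩ t, pp r := by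
  rw [prod_split s t, prod_split t s, Finset.inter_comm t s, Nat.gcd_mul_left]
  rw [Nat.Coprime.gcd_eq_one (coprime_prod_pp disjoint_sdiff_sdiff), mul_one]

lemma prod_mul_prod_pp (s t : Finset ℕ) :
    (∏ r ∈ s, pp r) * (∏ r ∈ t, pp r)
      = (∏ r ∈ s ∩ t, pp r) ^ 2 * ∏ r ∈ s ∆ t, pp r := by
  have hd : s ∆ t = (s \ t) ∪ (t \ s) := by rw [symmDiff_def]; rfl
  rw [prod_split s t, prod_split t s, Finset.inter_comm t s, hd,
    Finset.prod_union disjoint_sdiff_sdiff]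
  ring

lemma term_eq (s t : Finset ℕ) (α : ℝ) :
    (Nat.gcd (∏ r ∈ s, pp r) (∏ r ∈ t, pp r) : ℝ) ^ (2 * α) /
        (((∏ r ∈ s, pp r : ℕ) : ℝ) * ((∏ r ∈ t, pp r : ℕ) : ℝ)) ^ α
      = ((∏ r ∈ s ∆ t, pp r : ℕ) : ℝ) ^ (-α) := by
  have hg : (0:ℝ) < (∏ r ∈ s ∩ t, pp r : ℕ) := by exact_mod_cast prod_pp_pos _
  have hdpos : (0:ℝ) < (∏ r ∈ s ∆ t, pp r : ℕ) := by exact_mod_cast prod_pp_pos _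
  have hbb : ((∏ r ∈ s, pp r : ℕ) : ℝ) * ((∏ r ∈ t, pp r : ℕ) : ℝ)
      = ((∏ r ∈ s ∩ t, pp r : ℕ) : ℝ) ^ 2 * ((∏ r ∈ s ∆ t, pp r : ℕ) : ℝ) := by
    exact_mod_cast congrArg (Nat.cast : ℕ → ℝ) (prod_mul_prod_pp s t)
  rw [gcd_prod_pp, hbb]
  set g : ℝ := ((∏ r ∈ s ∩ t, pp r : ℕ) : ℝ)
  set d : ℝ := ((∏ r ∈ s ∆ t, pp r : ℕ) : ℝ)
  have h1 : (g ^ 2 * d) ^ α = (g ^ 2) ^ α * d ^ α :=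
    Real.mul_rpow (by positivity) hdpos.le
  have h2 : (g ^ 2) ^ α = g ^ (2 * α) := by
    rw [← Real.rpow_natCast g 2, ← Real.rpow_mul hg.le]
    norm_num
  rw [h1, h2, Real.rpow_neg hdpos.le]
  rw [div_mul_eq_div_div, div_self (by positivity)]
  rw [one_div]

lemma sum_eq (M R : ℕ) (α : ℝ) (s : Finset ℕ) (hs : s ⊆ Finset.range M) :
    ∑ b' ∈ (primeProdSet M).filter
        (fun b' => (((∏ r ∈ s, pp r)).primeFactors ∆ b'.primeFactors).card = R),
      (Nat.gcd (∏ r ∈ s, pp r) b' : ℝ) ^ (2 * α) /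
        (((∏ r ∈ s, pp r : ℕ) : ℝ) * (b' : ℝ)) ^ α
    = ∑ D ∈ Finset.powersetCard R (Finset.range M),
        ((∏ r ∈ D, pp r : ℕ) : ℝ) ^ (-α) := by
  classical
  rw [primeProdSet]
  simp only [show Nat.nth Nat.Prime = pp from rfl]
  rw [Finset.filter_image, Finset.sum_image (fun a _ b _ h => prod_pp_inj h)]
  have hcond : ∀ t ∈ (Finset.range M).powerset,
      ((((∏ r ∈ s, pp r)).primeFactors ∆ (∏ r ∈ t, pp r).primeFactors).card = R)
        ↔ (s ∆ t).card = R := by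
    intro t _
    rw [primeFactors_prod_pp, primeFactors_prod_pp, ← Finset.image_symmDiff _ _ pp_inj,
      Finset.card_image_of_injective _ pp_inj]
  rw [Finset.filter_congr hcond]
  rw [Finset.sum_congr rfl (fun t ht => term_eq s t α)]
  -- reindex t ↦ s ∆ t
  apply Finset.sum_nbij' (i := fun t => s ∆ t) (j := fun D => s ∆ D)
  · intro t ht
    simp only [Finset.mem_filter, Finset.mem_powerset] at ht
    rw [Finset.mem_powersetCard]
    exact ⟨le_trans symmDiff_le_sup (Finset.union_subset hs ht.1), ht.2⟩
  · intro D hD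
    rw [Finset.mem_powersetCard] at hD
    simp only [Finset.mem_filter, Finset.mem_powerset]
    constructor
    · exact le_trans symmDiff_le_sup (Finset.union_subset hs hD.1)
    · rw [symmDiff_symmDiff_cancel_left]; exact hD.2
  · intro t _; exact symmDiff_symmDiff_cancel_left s t
  · intro D _; exact symmDiff_symmDiff_cancel_left s D
  · intro t _; rfl

lemma card_filter_mem_powersetCard (x : Finset ℕ) {R : ℕ} (hR : 1 ≤ R) {a : ℕ}
    (ha : a ∈ x) :
    ((Finset.powersetCard R x).filter (fun D => a ∈ D)).card
      = (x.card - 1).choose (R - 1) := by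
  classical
  rw [← Finset.card_erase_of_mem ha, ← Finset.card_powersetCard (R-1) (x.erase a)]
  refine Finset.card_bij' (fun D _ => D.erase a) (fun E _ => insert a E) ?_ ?_ ?_ ?_
  · intro D hD
    simp only [Finset.mem_filter, Finset.mem_powersetCard] at hD
    rw [Finset.mem_powersetCard]
    exact ⟨Finset.erase_subset_erase a hD.1.1,
      by rw [Finset.card_erase_of_mem hD.2, hD.1.2]⟩
  · intro E hE
    rw [Finset.mem_powersetCard] at hE
    have haE : a ∉ E := fun h => Finset.notMem_erase a x (hE.1 h)
    simp only [Finset.mem_filter, Finset.mem_powersetCard]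
    refine ⟨⟨?_, ?_⟩, Finset.mem_insert_self a E⟩
    · exact Finset.insert_subset ha (hE.1.trans (Finset.erase_subset a x))
    · rw [Finset.card_insert_of_notMem haE, hE.2]; omega
  · intro D hD
    simp only [Finset.mem_filter] at hD
    exact Finset.insert_erase hD.2
  · intro E hE
    rw [Finset.mem_powersetCard] at hE
    exact Finset.erase_insert (fun h => Finset.notMem_erase a x (hE.1 h))

lemma prod_powersetCard {β : Type*} [CommMonoid β] (x : Finset ℕ) {R : ℕ} (hR : 1 ≤ R)
    (y : ℕ → β) :
    ∏ D ∈ Finset.powersetCard R x, ∏ r ∈ D, y r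
      = ∏ r ∈ x, y r ^ ((x.card - 1).choose (R - 1)) := by
  classical
  have h1 : ∀ D ∈ Finset.powersetCard R x,
      ∏ r ∈ D, y r = ∏ r ∈ x, (if r ∈ D then y r else 1) := by
    intro D hD
    rw [Finset.prod_ite_mem x D y,
      Finset.inter_eq_right.mpr (Finset.mem_powersetCard.mp hD).1]
  rw [Finset.prod_congr rfl h1, Finset.prod_comm]
  apply Finset.prod_congr rfl
  intro r hr
  rw [← Finset.prod_filter, Finset.prod_const,
    card_filter_mem_powersetCard x hR hr]

lemma sum_rpow_ge (M R : ℕ) (α : ℝ) (hR : 1 ≤ R) (hRM : R ≤ M) :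
    (M.choose R : ℝ) *
        Real.exp (-(α * R / M) * ∑ r ∈ Finset.range M, Real.log (pp r))
      ≤ ∑ D ∈ Finset.powersetCard R (Finset.range M),
          ((∏ r ∈ D, pp r : ℕ) : ℝ) ^ (-α) := by
  classical
  set P := Finset.powersetCard R (Finset.range M) with hP
  have hcard : P.card = M.choose R := by
    rw [hP, Finset.card_powersetCard, Finset.card_range]
  have hN0 : 0 < M.choose R := Nat.choose_pos hRM
  have hNR : (0:ℝ) < (M.choose R : ℝ) := by exact_mod_cast hN0
  have hM0 : (0:ℝ) < (M:ℝ) := by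
    have : 0 < M := le_trans hR hRM
    exact_mod_cast this
  -- AM-GM
  have hgm := Real.geom_mean_le_arith_mean_weighted P
      (fun _ => (M.choose R : ℝ)⁻¹)
      (fun D => ((∏ r ∈ D, pp r : ℕ) : ℝ) ^ (-α))
      (fun _ _ => by positivity)
      (by rw [Finset.sum_const, hcard, nsmul_eq_mul, mul_inv_cancel₀ hNR.ne'])
      (fun D _ => by positivity)
  -- compute the geometric mean
  have hprodpos : ∀ D ∈ P, (0:ℝ) < ((∏ r ∈ D, pp r : ℕ) : ℝ) := by
    intro D _; exact_mod_cast prod_pp_pos D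
  have hgeq : ∀ D ∈ P, (((∏ r ∈ D, pp r : ℕ) : ℝ) ^ (-α)) ^ ((M.choose R : ℝ)⁻¹)
      = ((∏ r ∈ D, pp r : ℕ) : ℝ) ^ (-α * (M.choose R : ℝ)⁻¹) := by
    intro D hD
    rw [← Real.rpow_mul (hprodpos D hD).le]
  rw [Finset.prod_congr rfl hgeq] at hgm
  rw [Real.finset_prod_rpow P _ (fun D hD => (hprodpos D hD).le)] at hgm
  -- the big product
  have hK : ∏ D ∈ P, ((∏ r ∈ D, pp r : ℕ) : ℝ)
      = ∏ r ∈ Finset.range M, ((pp r : ℝ)) ^ ((M-1).choose (R-1)) := by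
    push_cast
    rw [prod_powersetCard (Finset.range M) hR (fun r => (pp r : ℝ))]
    rw [Finset.card_range]
  rw [hK] at hgm
  -- rewrite as exp of sum of logs
  have hlog : ∏ r ∈ Finset.range M, ((pp r : ℝ)) ^ ((M-1).choose (R-1))
      = Real.exp (((M-1).choose (R-1) : ℝ) * ∑ r ∈ Finset.range M, Real.log (pp r)) := by
    rw [Finset.mul_sum, Real.exp_sum]
    apply Finset.prod_congr rfl
    intro r _
    have hppos : (0:ℝ) < (pp r : ℝ) := by exact_mod_cast pp_pos r
    rw [Real.exp_nat_mul, Real.exp_log hppos]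
  rw [hlog, ← Real.exp_log (x := Real.exp _ ^ (-α * (M.choose R:ℝ)⁻¹)) (by positivity),
    Real.log_rpow (Real.exp_pos _), Real.log_exp] at hgm
  -- identity K/N = R/M
  have hid : (M:ℝ) * ((M-1).choose (R-1) : ℝ) = (M.choose R : ℝ) * (R:ℝ) := by
    have := Nat.add_one_mul_choose_eq (M-1) (R-1)
    have hMs : M-1+1 = M := Nat.succ_pred_eq_of_pos (lt_of_lt_of_le hR hRM)
    have hRs : R-1+1 = R := Nat.succ_pred_eq_of_pos hR
    rw [hMs, hRs] at this
    exact_mod_cast this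
  have harg : -α * (M.choose R:ℝ)⁻¹ * (((M-1).choose (R-1) : ℝ) *
      ∑ r ∈ Finset.range M, Real.log (pp r))
      = -(α * R / M) * ∑ r ∈ Finset.range M, Real.log (pp r) := by
    have h1 : ((M-1).choose (R-1) : ℝ) = (M.choose R : ℝ) * R / M := by
      field_simp at hid ⊢
      linarith [hid]
    rw [h1]
    field_simp
  rw [harg] at hgm
  calc (M.choose R : ℝ) * Real.exp (-(α * R / M) * ∑ r ∈ Finset.range M, Real.log (pp r))
      ≤ (M.choose R : ℝ) * ∑ D ∈ P, (M.choose R : ℝ)⁻¹ * ((∏ r ∈ D, pp r : ℕ) : ℝ) ^ (-α) := by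
        apply mul_le_mul_of_nonneg_left _ hNR.le
        exact hgm
    _ = ∑ D ∈ P, ((∏ r ∈ D, pp r : ℕ) : ℝ) ^ (-α) := by
        rw [← Finset.mul_sum, ← mul_assoc, mul_inv_cancel₀ hNR.ne', one_mul]

set_option maxHeartbeats 1000000 in
lemma main_eventually (α : ℝ) (hα1 : 1/2 < α) (hα2 : α < 1) :
    ∀ᶠ M : ℕ in atTop,
      1 ≤ Rval M α ∧ Rval M α ≤ M ∧
        Real.exp ((M : ℝ) ^ (1 - α) / (2.72 * (Real.log M) ^ α))
          ≤ (M.choose (Rval M α) : ℝ) *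
              Real.exp (-(α * (Rval M α) / M) *
                ∑ r ∈ Finset.range M, Real.log (pp r)) := by
  have hα0 : (0:ℝ) ≤ α := by linarith
  have hev3 : ∀ᶠ M : ℕ in atTop, (1:ℝ) ≤ Real.log M :=
    (Real.tendsto_log_atTop.comp tendsto_natCast_atTop_atTop).eventually_ge_atTop 1
  have hev4 : ∀ᶠ M : ℕ in atTop,
      ‖Real.log (Real.log M)‖ ≤ 0.04 * ‖Real.log M‖ :=
    (Real.tendsto_log_atTop.comp tendsto_natCast_atTop_atTop).eventually
      (Real.isLittleO_log_id_atTop.def (by norm_num))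
  have hev5 : ∀ᶠ M : ℕ in atTop,
      ‖Real.log (M:ℝ)‖ ≤ 0.018 * ‖((M:ℝ)) ^ (1-α)‖ :=
    tendsto_natCast_atTop_atTop.eventually
      ((isLittleO_log_rpow_atTop (by linarith : (0:ℝ) < 1-α)).def (by norm_num))
  have hev6 : ∀ᶠ M : ℕ in atTop, 3 ≤ M := eventually_ge_atTop 3
  filter_upwards [theta_bound, hev3, hev4, hev5, hev6] with M hΘ hlogM hll04 hlr hM3
  have hM0 : (0:ℝ) < (M:ℝ) := by exact_mod_cast (by omega : 0 < M)
  have hM1 : (1:ℝ) ≤ (M:ℝ) := by exact_mod_cast (by omega : 1 ≤ M)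
  have hll0 : 0 ≤ Real.log (Real.log M) := Real.log_nonneg hlogM
  have hll04' : Real.log (Real.log M) ≤ 0.04 * Real.log M := by
    rw [Real.norm_eq_abs, Real.norm_eq_abs, abs_of_nonneg hll0,
      abs_of_nonneg (by linarith : (0:ℝ) ≤ Real.log M)] at hll04
    exact hll04
  set L : ℝ := Real.log M + Real.log (Real.log M) with hLdef
  have hL1 : (1:ℝ) ≤ L := by linarith
  have hL0 : (0:ℝ) < L := by linarith
  have hL104 : L ≤ 1.04 * Real.log M := by linarith
  have hMα0 : (0:ℝ) < (M:ℝ) ^ (1-α) := Real.rpow_pos_of_pos hM0 _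
  have hlr' : Real.log M ≤ 0.018 * (M:ℝ) ^ (1-α) := by
    rw [Real.norm_eq_abs, Real.norm_eq_abs, abs_of_nonneg (by linarith : (0:ℝ) ≤ Real.log M),
      abs_of_nonneg hMα0.le] at hlr
    exact hlr
  have hlogMα0 : (0:ℝ) ≤ (Real.log M) ^ α := Real.rpow_nonneg (by linarith) _
  have hLα : L ^ α ≤ 1.04 * (Real.log M) ^ α := by
    calc L ^ α ≤ (1.04 * Real.log M) ^ α :=
          Real.rpow_le_rpow hL0.le hL104 hα0
      _ = (1.04:ℝ) ^ α * (Real.log M) ^ α :=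
          Real.mul_rpow (by norm_num) (by linarith)
      _ ≤ 1.04 * (Real.log M) ^ α := by
          apply mul_le_mul_of_nonneg_right _ hlogMα0
          calc (1.04:ℝ) ^ α ≤ (1.04:ℝ) ^ (1:ℝ) :=
                Real.rpow_le_rpow_of_exponent_le (by norm_num) (le_of_lt hα2)
            _ = 1.04 := Real.rpow_one _
  have hlogMα : (Real.log M) ^ α ≤ Real.log M := by
    calc (Real.log M) ^ α ≤ (Real.log M) ^ (1:ℝ) :=
          Real.rpow_le_rpow_of_exponent_le hlogM (le_of_lt hα2)
      _ = Real.log M := Real.rpow_one _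
  have hLα1 : (1:ℝ) ≤ L ^ α := by
    calc (1:ℝ) = (1:ℝ) ^ α := (Real.one_rpow α).symm
      _ ≤ L ^ α := Real.rpow_le_rpow (by norm_num) hL1 hα0
  have he272 : Real.exp 1 ≤ 2.72 := by linarith [Real.exp_one_lt_d9]
  have he1 : (1:ℝ) ≤ Real.exp 1 := by linarith [Real.exp_one_gt_d9]
  have hden0 : (0:ℝ) < Real.exp 1 * L ^ α := by positivity
  set R₀ : ℝ := (M:ℝ) ^ (1-α) / (Real.exp 1 * L ^ α) with hR₀def
  have hR₀pos : 0 < R₀ := by positivity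
  have hden_le : Real.exp 1 * L ^ α ≤ (1/19) * (M:ℝ) ^ (1-α) := by
    have h1 : L ^ α ≤ 1.04 * Real.log M := by
      calc L ^ α ≤ 1.04 * (Real.log M) ^ α := hLα
        _ ≤ 1.04 * Real.log M := by linarith
    calc Real.exp 1 * L ^ α ≤ 2.72 * (1.04 * Real.log M) :=
          mul_le_mul he272 h1 (Real.rpow_nonneg hL0.le α) (by norm_num)
      _ ≤ 2.72 * (1.04 * (0.018 * (M:ℝ) ^ (1-α))) := by linarith
      _ ≤ (1/19) * (M:ℝ) ^ (1-α) := by linarith [hMα0.le]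
  have hR₀19 : (19:ℝ) ≤ R₀ := by
    rw [hR₀def, le_div_iff₀ hden0]
    linarith
  set R : ℕ := Rval M α with hRdef
  have hRR₀ : R = ⌊R₀⌋₊ := rfl
  have hR19 : 19 ≤ R := by
    rw [hRR₀]
    exact Nat.le_floor (by push_cast; linarith)
  have h1R : 1 ≤ R := by omega
  have hRM : R ≤ M := by
    have hden1 : (1:ℝ) ≤ Real.exp 1 * L ^ α := by
      have := mul_le_mul he1 hLα1 (by norm_num) (by linarith)
      linarith
    have hR₀M : R₀ ≤ (M:ℝ) := by
      calc R₀ ≤ (M:ℝ) ^ (1-α) := div_le_self hMα0.le hden1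
        _ ≤ (M:ℝ) ^ (1:ℝ) := Real.rpow_le_rpow_of_exponent_le hM1 (by linarith)
        _ = (M:ℝ) := Real.rpow_one _
    calc R = ⌊R₀⌋₊ := hRR₀
      _ ≤ ⌊(M:ℝ)⌋₊ := Nat.floor_le_floor hR₀M
      _ = M := Nat.floor_natCast M
  refine ⟨h1R, hRM, ?_⟩
  have hRpos : (0:ℝ) < (R:ℝ) := by exact_mod_cast (by omega : 0 < R)
  have hR19R : (19:ℝ) ≤ (R:ℝ) := by exact_mod_cast hR19
  have hRleR₀ : (R:ℝ) ≤ R₀ := by rw [hRR₀]; exact Nat.floor_le hR₀pos.le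
  have hR₀lt : R₀ < (R:ℝ) + 1 := by rw [hRR₀]; exact Nat.lt_floor_add_one R₀
  set T : ℝ := (M:ℝ) ^ (1-α) / (2.72 * (Real.log M) ^ α) with hTdef
  have hlogMα0' : (0:ℝ) < (Real.log M) ^ α := Real.rpow_pos_of_pos (by linarith) _
  have hT104 : T ≤ 1.04 * R₀ := by
    rw [hTdef, hR₀def, mul_div_assoc']
    rw [div_le_div_iff₀ (by positivity) hden0]
    have h1 : Real.exp 1 * L ^ α ≤ 1.04 * (2.72 * (Real.log M) ^ α) := by
      have := mul_le_mul he272 hLα (Real.rpow_nonneg hL0.le α) (by norm_num)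
      linarith
    linarith [mul_le_mul_of_nonneg_left h1 hMα0.le]
  have hT : T ≤ 1.1 * (R:ℝ) := by linarith
  -- log R bound
  have hlogR : Real.log R ≤ (1-α) * Real.log M - 1 - α * Real.log (Real.log M) := by
    have h1 : Real.log R ≤ Real.log R₀ := Real.log_le_log hRpos hRleR₀
    have h2 : Real.log R₀ = (1-α) * Real.log M - (1 + α * Real.log L) := by
      rw [hR₀def, Real.log_div hMα0.ne' hden0.ne', Real.log_rpow hM0,
        Real.log_mul (Real.exp_ne_zero 1) (by positivity : L ^ α ≠ 0),
        Real.log_exp, Real.log_rpow hL0]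
    have h3 : Real.log (Real.log M) ≤ Real.log L := by
      apply Real.log_le_log (by linarith)
      linarith
    have h4 : α * Real.log (Real.log M) ≤ α * Real.log L :=
      mul_le_mul_of_nonneg_left h3 hα0
    linarith
  -- final chain
  set Θ : ℝ := ∑ r ∈ Finset.range M, Real.log (pp r) with hΘdef
  have hcoef : -(α * (R:ℝ) / (M:ℝ)) ≤ 0 := by
    apply neg_nonpos_of_nonneg
    positivity
  have hE : -(α * (R:ℝ) * (Real.log M + Real.log (Real.log M) - 1/4))
      ≤ -(α * (R:ℝ) / (M:ℝ)) * Θ := by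
    have h1 : -(α * (R:ℝ) / (M:ℝ)) * ((M:ℝ) * (Real.log M + Real.log (Real.log M) - 1/4))
        ≤ -(α * (R:ℝ) / (M:ℝ)) * Θ := mul_le_mul_of_nonpos_left hΘ hcoef
    have h2 : -(α * (R:ℝ) / (M:ℝ)) * ((M:ℝ) * (Real.log M + Real.log (Real.log M) - 1/4))
        = -(α * (R:ℝ) * (Real.log M + Real.log (Real.log M) - 1/4)) := by
      field_simp
    linarith
  have hNge : ((M:ℝ)/(R:ℝ))^R ≤ (M.choose R : ℝ) := pow_div_le_choose R M h1R hRM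
  have hpow : ((M:ℝ)/(R:ℝ))^R = Real.exp ((R:ℝ) * Real.log ((M:ℝ)/(R:ℝ))) := by
    rw [← Real.log_pow, Real.exp_log (by positivity)]
  have hlogdivMR : Real.log ((M:ℝ)/(R:ℝ)) = Real.log M - Real.log R :=
    Real.log_div hM0.ne' hRpos.ne'
  have hlogdiff : α * Real.log M + 1 + α * Real.log (Real.log M)
      ≤ Real.log M - Real.log R := by nlinarith
  have hmul : (R:ℝ) * (α * Real.log M + 1 + α * Real.log (Real.log M))
      ≤ (R:ℝ) * (Real.log M - Real.log R) :=
    mul_le_mul_of_nonneg_left hlogdiff hRpos.le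
  have hquarter : 0.1 * (R:ℝ) ≤ α / 4 * (R:ℝ) := by
    apply mul_le_mul_of_nonneg_right _ hRpos.le
    linarith
  have hmain : T ≤ (R:ℝ) * Real.log ((M:ℝ)/(R:ℝ)) + -(α * (R:ℝ) / (M:ℝ)) * Θ := by
    rw [hlogdivMR]
    nlinarith [hE, hmul, hT, hquarter]
  calc Real.exp T
      ≤ Real.exp ((R:ℝ) * Real.log ((M:ℝ)/(R:ℝ)) + -(α * (R:ℝ) / (M:ℝ)) * Θ) :=
        Real.exp_le_exp.mpr hmain
    _ = ((M:ℝ)/(R:ℝ))^R * Real.exp (-(α * (R:ℝ) / (M:ℝ)) * Θ) := by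
        rw [Real.exp_add, ← hpow]
    _ ≤ (M.choose R : ℝ) * Real.exp (-(α * (R:ℝ) / (M:ℝ)) * Θ) :=
        mul_le_mul_of_nonneg_right hNge (Real.exp_pos _).le

end Stmt6Aux

theorem stmt_6 (α : ℝ) (hα : α ∈ Set.Ioo (1/2 : ℝ) 1) :
    ∃ M₀ : ℕ, ∀ M : ℕ, M₀ ≤ M → 1 ≤ M →
      ∀ b ∈ primeProdSet M,
        Real.exp ((M : ℝ) ^ (1 - α) / (2.72 * (Real.log M) ^ α)) ≤
          ∑ b' ∈ (primeProdSet M).filter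
              (fun b' => (b.primeFactors ∆ b'.primeFactors).card = Rval M α),
            (Nat.gcd b b' : ℝ) ^ (2 * α) / ((b : ℝ) * b') ^ α := by
  obtain ⟨hα1, hα2⟩ := hα
  obtain ⟨M₀, hM₀⟩ := Filter.eventually_atTop.mp (Stmt6Aux.main_eventually α hα1 hα2)
  refine ⟨M₀, fun M hM hM1 b hb => ?_⟩
  obtain ⟨h1R, hRM, hkey⟩ := hM₀ M hM
  obtain ⟨s, hsmem, rfl⟩ := Finset.mem_image.mp hb
  have hs : s ⊆ Finset.range M := Finset.mem_powerset.mp hsmem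
  calc Real.exp ((M : ℝ) ^ (1 - α) / (2.72 * (Real.log M) ^ α))
      ≤ (M.choose (Rval M α) : ℝ) *
          Real.exp (-(α * (Rval M α) / M) *
            ∑ r ∈ Finset.range M, Real.log (Stmt6Aux.pp r)) := hkey
    _ ≤ ∑ D ∈ Finset.powersetCard (Rval M α) (Finset.range M),
          ((∏ r ∈ D, Stmt6Aux.pp r : ℕ) : ℝ) ^ (-α) :=
        Stmt6Aux.sum_rpow_ge M (Rval M α) α h1R hRM
    _ = _ := (Stmt6Aux.sum_eq M (Rval M α) α s hs).symm
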